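/- For all real a with 0 < a < 1 and all θ ∈ ℝ, the origin (0,0) belongs to the horocycle region H(a,θ) if and only if a ≥ 1/√2. Consequently, for the one-point set F = {(0,0)}, every horocycle H(1/√2, θ), θ ∈ ℝ, is an enclosing horocycle of minimal size, and these are not all equal as subsets of ℝ² (e.g. H(1/√2, 0) ≠ H(1/√2, π)); hence the bound a < 2^(−1/2) in the uniqueness theorem for minimal enclosing horocycles cannot be improved. -/

import Mathlib

/-!
Rotations fix the origin, so `(0,0) ∈ H(a,θ)` iff the origin lies in the unrotated ellipse,
i.e. iff `(1 - a²)² ≤ a⁴`, which is `2a² ≥ 1`. The tangency point `(0,1)` lies in `H(a,0)`;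
it lies in `H(a,π)` only if `(0,-1)` lies in the ellipse, i.e. `(2 - a²)² ≤ a⁴`, forcing `a² ≥ 1`.
-/

/-- Rotation of the plane `ℝ × ℝ` about the origin by angle `θ`. -/
noncomputable def planeRot (θ : ℝ) (p : ℝ × ℝ) : ℝ × ℝ :=
  (p.1 * Real.cos θ - p.2 * Real.sin θ, p.1 * Real.sin θ + p.2 * Real.cos θ)

/-- The horocycle region `H(a,θ)`: the image under the rotation about the origin by
angle `θ` of the closed elliptical region `{(x,y) : a²x² + (y − (1 − a²))² ≤ a⁴}`. -/
noncomputable def horoRegion (a θ : ℝ) : Set (ℝ × ℝ) :=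
  planeRot θ '' {p | a ^ 2 * p.1 ^ 2 + (p.2 - (1 - a ^ 2)) ^ 2 ≤ a ^ 4}

open Real

lemma planeRot_neg_planeRot (θ : ℝ) (p : ℝ × ℝ) : planeRot (-θ) (planeRot θ p) = p := by
  simp only [planeRot, cos_neg, sin_neg]
  ext
  · linear_combination p.1 * sin_sq_add_cos_sq θ
  · linear_combination p.2 * sin_sq_add_cos_sq θ

lemma mem_horoRegion_iff {a θ : ℝ} {p : ℝ × ℝ} :
    p ∈ horoRegion a θ ↔
      a ^ 2 * (planeRot (-θ) p).1 ^ 2 + ((planeRot (-θ) p).2 - (1 - a ^ 2)) ^ 2 ≤ a ^ 4 := by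
  have hleft : Function.LeftInverse (planeRot (-θ)) (planeRot θ) := planeRot_neg_planeRot θ
  have hright : Function.RightInverse (planeRot (-θ)) (planeRot θ) := fun p => by
    simpa using planeRot_neg_planeRot (-θ) p
  rw [horoRegion, Set.image_eq_preimage_of_inverse hleft hright]
  rfl

lemma zero_mem_horoRegion_iff {a : ℝ} (θ : ℝ) (ha : 0 ≤ a) :
    ((0 : ℝ), (0 : ℝ)) ∈ horoRegion a θ ↔ 1 / √2 ≤ a := by
  have hfix : planeRot (-θ) (0, 0) = (0, 0) := by simp [planeRot]
  rw [mem_horoRegion_iff, hfix, one_div, ← sqrt_inv, sqrt_le_iff]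
  constructor
  · intro h
    exact ⟨ha, by nlinarith⟩
  · rintro ⟨-, h⟩
    nlinarith

lemma horoRegion_zero_ne_horoRegion_pi {a : ℝ} (ha : a ^ 2 < 1) :
    horoRegion a 0 ≠ horoRegion a π := by
  have hmem : ((0 : ℝ), (1 : ℝ)) ∈ horoRegion a 0 := by
    rw [mem_horoRegion_iff]
    simp [planeRot, ← pow_mul]
  have hnot : ((0 : ℝ), (1 : ℝ)) ∉ horoRegion a π := by
    rw [mem_horoRegion_iff]
    simp only [planeRot, cos_neg, sin_neg, cos_pi, sin_pi]
    nlinarith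
  exact fun h => hnot (h ▸ hmem)

/-- The origin belongs to `H(a,θ)` iff `a ≥ 1/√2`.  Consequently, for `F = {(0,0)}`,
every horocycle `H(1/√2, θ)` is a minimal enclosing horocycle, and these are not all
equal: the bound `a < 2^(−1/2)` in the uniqueness theorem cannot be improved. -/
theorem minimal_horocycle_bound_sharp :
    (∀ a θ : ℝ, 0 < a → a < 1 →
      (((0 : ℝ), (0 : ℝ)) ∈ horoRegion a θ ↔ 1 / Real.sqrt 2 ≤ a)) ∧
    (∀ θ : ℝ, ((0 : ℝ), (0 : ℝ)) ∈ horoRegion (1 / Real.sqrt 2) θ) ∧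
    (∀ a' θ' : ℝ, 0 < a' → a' < 1 → ((0 : ℝ), (0 : ℝ)) ∈ horoRegion a' θ' →
      1 / Real.sqrt 2 ≤ a') ∧
    horoRegion (1 / Real.sqrt 2) 0 ≠ horoRegion (1 / Real.sqrt 2) Real.pi := by
  have hpos : (0 : ℝ) ≤ 1 / √2 := by positivity
  have hsq : (1 / √2) ^ 2 < 1 := by
    rw [div_pow, sq_sqrt zero_le_two]
    norm_num
  refine ⟨fun a θ ha _ => zero_mem_horoRegion_iff θ ha.le,
    fun θ => (zero_mem_horoRegion_iff θ hpos).2 le_rfl,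
    fun a θ ha _ hmem => (zero_mem_horoRegion_iff θ ha.le).1 hmem,
    horoRegion_zero_ne_horoRegion_pi hsq⟩
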